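/- arXiv:1906.05451 — 2 statements merged into one kernel-verified Lean document; each statement's English description precedes it below -/
import Mathlib

section
/- Let x_k, y_k (k = 1,…,N) be nonnegative real numbers and c > 0. If x_k y_k ≥ c² + z_k² for all k with z_k ≥ 0, then (∑_k x_k)(∑_k y_k) ≥ N²c² + (∑_k z_k)². -/
open Finset

/-- Minkowski's inequality in the plane, read off from the triangle inequality in `ℂ`. -/
theorem sq_sum_add_sq_sum_le_sq_sum_sqrt {ι : Type*} (s : Finset ι) (a b : ι → ℝ) :
    (∑ i ∈ s, a i) ^ 2 + (∑ i ∈ s, b i) ^ 2 ≤ (∑ i ∈ s, √(a i ^ 2 + b i ^ 2)) ^ 2 := by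
  let w : ι → ℂ := fun i => ⟨a i, b i⟩
  have norm_sum_sq : ‖∑ i ∈ s, w i‖ ^ 2 = (∑ i ∈ s, a i) ^ 2 + (∑ i ∈ s, b i) ^ 2 := by
    rw [Complex.sq_norm, Complex.normSq_apply, Complex.re_sum, Complex.im_sum]
    ring
  have norm_w (i : ι) : ‖w i‖ = √(a i ^ 2 + b i ^ 2) := Complex.norm_eq_sqrt_sq_add_sq (w i)
  rw [← norm_sum_sq, ← sum_congr rfl fun i _ => norm_w i]
  exact pow_le_pow_left₀ (norm_nonneg _) (norm_sum_le s w) 2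

theorem stmt1_general (N : ℕ) (c : ℝ) (x y z : Fin N → ℝ)
    (hx : ∀ k, 0 ≤ x k) (hy : ∀ k, 0 ≤ y k)
    (h : ∀ k, x k * y k ≥ c ^ 2 + z k ^ 2) :
    (∑ k, x k) * (∑ k, y k) ≥ (N : ℝ) ^ 2 * c ^ 2 + (∑ k, z k) ^ 2 := by
  calc (N : ℝ) ^ 2 * c ^ 2 + (∑ k, z k) ^ 2
      = (∑ _k : Fin N, c) ^ 2 + (∑ k, z k) ^ 2 := by simp [mul_pow]
    _ ≤ (∑ k, √(c ^ 2 + z k ^ 2)) ^ 2 := sq_sum_add_sq_sum_le_sq_sum_sqrt _ _ _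
    _ ≤ (∑ k, x k) * (∑ k, y k) :=
      sum_sq_le_sum_mul_sum_of_sq_le_mul _ (fun k _ => hx k) (fun k _ => hy k) fun k _ => by
        rw [Real.sq_sqrt (by positivity)]
        exact h k

theorem stmt1 (N : ℕ) (c : ℝ) (hc : 0 < c) (x y z : Fin N → ℝ)
    (hx : ∀ k, 0 ≤ x k) (hy : ∀ k, 0 ≤ y k) (hz : ∀ k, 0 ≤ z k)
    (h : ∀ k, x k * y k ≥ c ^ 2 + z k ^ 2) :
    (∑ k, x k) * (∑ k, y k) ≥ (N : ℝ) ^ 2 * c ^ 2 + (∑ k, z k) ^ 2 :=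
  stmt1_general N c x y z hx hy h
end

section
/- Let f(x) = e^{−‖x−a‖²/(2ζ) + d} · e^{2πi(‖x−a‖²/(2ε) + ⟨b,x⟩ + c)} on ℝᴺ with ζ, ε > 0, a, b ∈ ℝᴺ, c, d ∈ ℝ. Then equality holds in the sharper N-dimensional Heisenberg inequality: ∫‖x−a‖²|f|²dx · ∫‖w−b‖²|𝓕f|²dw = (N²/16π²)‖f‖₂⁴ + [∫ ∑_k |x_k−a_k||∂φ/∂x_k − b_k| λ²dx]², where λ(x) = e^{−‖x−a‖²/(2ζ)+d} and φ(x) = ‖x−a‖²/(2ε) + ⟨b,x⟩ + c. -/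
/-!
Everything is Gaussian. `‖f‖² = λ²` is a real Gaussian centred at `a`, and `∂φ/∂x_k - b_k =
(x_k - a_k)/ε`, so the covariance term is `ε⁻¹ ∫ ‖x - a‖² λ²`. Up to the unimodular factor and
`e^d`, `𝓕f(w)` is the Fourier transform at `b - w` of the complex Gaussian `exp (-β ‖y‖²)` with
`β = 1/(2ζ) - iπ/ε`, so `|𝓕f(w)|² ∝ exp (-2π² Re(β⁻¹) ‖w - b‖²)`. The three integrals are then
`Nζ/2`, `Nζ/(2ε)` and `(N/2)(1/(4π²ζ) + ζ/ε²)` times `‖f‖₂²`, and the identity reduces to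
`|β|² = 1/(4ζ²) + π²/ε²`.
-/

open MeasureTheory Real Complex

theorem integral_sq_mul_exp_neg_mul_sq {b : ℝ} (hb : 0 < b) :
    ∫ x : ℝ, x ^ 2 * rexp (-b * x ^ 2) = √(π / b) / (2 * b) := by
  have hderiv (x : ℝ) :
      HasDerivAt (fun x ↦ rexp (-b * x ^ 2)) (-(2 * b) * (x * rexp (-b * x ^ 2))) x := by
    convert ((hasDerivAt_pow 2 x).const_mul (-b)).exp using 1
    ring
  have hmoment : Integrable (fun x : ℝ ↦ x ^ 2 * rexp (-b * x ^ 2)) := by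
    simpa [Real.rpow_natCast] using integrable_rpow_mul_exp_neg_mul_sq hb (s := 2) (by norm_num)
  have hrw (x : ℝ) :
      x * (-(2 * b) * (x * rexp (-b * x ^ 2))) = -(2 * b) * (x ^ 2 * rexp (-b * x ^ 2)) := by
    ring
  -- integration by parts against `u = id`: `∫ x * (-2 b x e^{-b x²}) = -∫ e^{-b x²}`
  have hparts := integral_mul_deriv_eq_deriv_mul_of_integrable (u := id) (u' := fun _ ↦ 1)
    (fun x _ ↦ hasDerivAt_id x) (fun x _ ↦ hderiv x)
    (by simpa only [Pi.mul_def, id, hrw] using hmoment.const_mul (-(2 * b)))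
    (by simpa [Pi.mul_def] using integrable_exp_neg_mul_sq hb)
    (by simpa [Pi.mul_def] using integrable_mul_exp_neg_mul_sq hb)
  simp only [id, one_mul, integral_gaussian, hrw, integral_const_mul] at hparts
  rw [eq_div_iff (by positivity)]
  linarith

section GaussianPi

variable {ι : Type*} [Fintype ι]

theorem exp_neg_mul_sum_sq_eq_prod (p : ℝ) (x : ι → ℝ) :
    rexp (-p * ∑ k, x k ^ 2) = ∏ k, rexp (-p * x k ^ 2) := by
  rw [← Real.exp_sum, Finset.mul_sum]

theorem integral_exp_neg_mul_sum_sq (p : ℝ) :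
    ∫ x : ι → ℝ, rexp (-p * ∑ k, x k ^ 2) = √(π / p) ^ Fintype.card ι := by
  simp_rw [exp_neg_mul_sum_sq_eq_prod, volume_pi]
  rw [integral_fintype_prod_eq_pow (fun t : ℝ ↦ rexp (-p * t ^ 2)), integral_gaussian]

theorem integral_sum_sq_mul_exp_neg_mul_sum_sq {p : ℝ} (hp : 0 < p) :
    ∫ x : ι → ℝ, (∑ k, x k ^ 2) * rexp (-p * ∑ k, x k ^ 2) =
      Fintype.card ι / (2 * p) * √(π / p) ^ Fintype.card ι := by
  classical
  -- the `k`-th summand is a product over the coordinates, with `t ^ 2` in the `k`-th factor only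
  let g (k j : ι) (t : ℝ) : ℝ := (if j = k then t ^ 2 else 1) * rexp (-p * t ^ 2)
  have hfactor (x : ι → ℝ) (k : ι) : x k ^ 2 * rexp (-p * ∑ j, x j ^ 2) = ∏ j, g k j (x j) := by
    simp only [g, Finset.prod_mul_distrib, Finset.prod_ite_eq', Finset.mem_univ, if_true,
      Finset.prod_ite_eq', exp_neg_mul_sum_sq_eq_prod]
  have hg (k j : ι) : ∫ t, g k j t = (if j = k then 1 / (2 * p) else 1) * √(π / p) := by
    by_cases hjk : j = k
    · simp only [g, hjk, if_true, integral_sq_mul_exp_neg_mul_sq hp]; ring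
    · simp only [g, hjk, if_false, one_mul, integral_gaussian]
  have hint (k : ι) : Integrable (fun x : ι → ℝ ↦ ∏ j, g k j (x j)) := by
    refine Integrable.fintype_prod (fun j ↦ ?_)
    by_cases hjk : j = k
    · simpa [g, hjk, Real.rpow_natCast] using
        integrable_rpow_mul_exp_neg_mul_sq hp (s := 2) (by norm_num)
    · simpa [g, hjk] using integrable_exp_neg_mul_sq hp
  simp_rw [Finset.sum_mul, hfactor]
  rw [integral_finsetSum _ (fun k _ ↦ hint k)]
  simp only [volume_pi, integral_fintype_prod_eq_prod, hg, Finset.prod_mul_distrib,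
    Finset.prod_ite_eq', Finset.mem_univ, if_true, Finset.prod_const, Finset.sum_const,
    Finset.card_univ, nsmul_eq_mul]
  ring

theorem integral_exp_neg_mul_sum_sub_sq (p : ℝ) (a : ι → ℝ) :
    ∫ x : ι → ℝ, rexp (-p * ∑ k, (x k - a k) ^ 2) = √(π / p) ^ Fintype.card ι :=
  (integral_sub_right_eq_self (fun y : ι → ℝ ↦ rexp (-p * ∑ k, y k ^ 2)) a).trans
    (integral_exp_neg_mul_sum_sq p)

theorem integral_sum_sub_sq_mul_exp_neg_mul_sum_sub_sq {p : ℝ} (hp : 0 < p) (a : ι → ℝ) :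
    ∫ x : ι → ℝ, (∑ k, (x k - a k) ^ 2) * rexp (-p * ∑ k, (x k - a k) ^ 2) =
      Fintype.card ι / (2 * p) * √(π / p) ^ Fintype.card ι :=
  (integral_sub_right_eq_self
    (fun y : ι → ℝ ↦ (∑ k, y k ^ 2) * rexp (-p * ∑ k, y k ^ 2)) a).trans
    (integral_sum_sq_mul_exp_neg_mul_sum_sq hp)

end GaussianPi

section GaussianFourier

variable {ι : Type*} [Fintype ι]

theorem norm_sq_integral_cexp_neg_mul_sum_sq_add {β : ℂ} (hβ : 0 < β.re) (v : ι → ℝ) :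
    ‖∫ y : ι → ℝ, cexp (-β * ∑ k, (y k : ℂ) ^ 2 + 2 * π * I * ∑ k, (v k : ℂ) * y k)‖ ^ 2 =
      (π / ‖β‖) ^ Fintype.card ι * rexp (-(2 * π ^ 2 * β⁻¹.re) * ∑ k, v k ^ 2) := by
  have hlin (y : ι → ℝ) :
      2 * π * I * ∑ k, (v k : ℂ) * y k = ∑ k, 2 * π * I * v k * y k := by
    simp only [Finset.mul_sum, mul_assoc]
  simp only [hlin]
  rw [GaussianFourier.integral_cexp_neg_mul_sum_add hβ, norm_mul, mul_pow, ← norm_pow,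
    ← cpow_nat_mul]
  have hsum : (∑ k, (2 * π * I * (v k : ℂ)) ^ 2) / (4 * β) =
      ((-(π ^ 2 * ∑ k, v k ^ 2) : ℝ) : ℂ) * β⁻¹ := by
    push_cast
    rw [Finset.sum_div, Finset.mul_sum, ← Finset.sum_neg_distrib, Finset.sum_mul]
    refine Finset.sum_congr rfl fun k _ ↦ ?_
    rw [div_eq_mul_inv, mul_inv, ← mul_assoc]
    congr 1
    linear_combination (π ^ 2 * (v k : ℂ) ^ 2) * I_sq
  rw [hsum, norm_exp, ← Real.exp_nat_mul, re_ofReal_mul]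
  push_cast
  rw [mul_div_cancel₀ _ two_ne_zero, cpow_natCast, norm_pow, norm_div, norm_real,
    Real.norm_of_nonneg pi_pos.le]
  congr 2
  ring

theorem integral_sum_sq_mul_norm_sq_integral_cexp_neg_mul_sum_sq_add {β : ℂ} (hβ : 0 < β.re) :
    ∫ v : ι → ℝ, (∑ k, v k ^ 2) *
        ‖∫ y : ι → ℝ, cexp (-β * ∑ k, (y k : ℂ) ^ 2 + 2 * π * I * ∑ k, (v k : ℂ) * y k)‖ ^ 2 =
      Fintype.card ι * ‖β‖ ^ 2 / (4 * π ^ 2 * β.re) * √(π / (2 * β.re)) ^ Fintype.card ι := by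
  have hβ0 : 0 < ‖β‖ := norm_pos_iff.2 fun h ↦ by simp [h] at hβ
  set γ := 2 * π ^ 2 * β⁻¹.re with hγ_def
  have hγ : γ = 2 * π ^ 2 * β.re / ‖β‖ ^ 2 := by rw [hγ_def, inv_re, normSq_eq_norm_sq]; ring
  have hγpos : 0 < γ := by rw [hγ]; positivity
  have hsqrt : π / ‖β‖ * √(π / γ) = √(π / (2 * β.re)) := by
    rw [← Real.sqrt_sq (by positivity : 0 ≤ π / ‖β‖), ← Real.sqrt_mul (sq_nonneg _), hγ]
    congr 1
    field_simp
  simp_rw [norm_sq_integral_cexp_neg_mul_sum_sq_add hβ, mul_left_comm _ ((π / ‖β‖) ^ _)]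
  rw [integral_const_mul, integral_sum_sq_mul_exp_neg_mul_sum_sq hγpos, ← hsqrt, mul_pow, hγ]
  field_simp
  ring

end GaussianFourier

theorem hasFDerivAt_sum_apply {ι : Type*} [Fintype ι] {g : ι → ℝ → ℝ} {g' : ι → ℝ}
    {x : ι → ℝ} (hg : ∀ j, HasDerivAt (g j) (g' j) (x j)) :
    HasFDerivAt (fun y : ι → ℝ ↦ ∑ j, g j (y j))
      (∑ j, g' j • ContinuousLinearMap.proj j : (ι → ℝ) →L[ℝ] ℝ) x :=
  HasFDerivAt.fun_sum fun j _ ↦ (hg j).comp_hasFDerivAt x (hasFDerivAt_apply j x)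

section Chirp

variable {ι : Type*} [Fintype ι] (ζ ε c d : ℝ) (a b : ι → ℝ)

noncomputable def chirpAmplitude (x : ι → ℝ) : ℝ := rexp (-(∑ k, (x k - a k) ^ 2) / (2 * ζ) + d)

noncomputable def chirpPhase (x : ι → ℝ) : ℝ :=
  (∑ k, (x k - a k) ^ 2) / (2 * ε) + (∑ k, b k * x k) + c

noncomputable def chirp (x : ι → ℝ) : ℂ :=
  (chirpAmplitude ζ d a x : ℂ) * cexp (2 * π * I * (chirpPhase ε c a b x : ℂ))

/-- The chirp is `exp (-chirpRate ζ ε * ‖x - a‖²)` times a linear phase and the constant `e ^ d`. -/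
noncomputable def chirpRate : ℂ := ((2 * ζ)⁻¹ : ℝ) - (π / ε : ℝ) * I

variable {ζ ε c d a b}

theorem hasFDerivAt_chirpPhase (x : ι → ℝ) :
    HasFDerivAt (chirpPhase ε c a b)
      (∑ j, ((x j - a j) / ε + b j) • ContinuousLinearMap.proj j : (ι → ℝ) →L[ℝ] ℝ) x := by
  have hsum : chirpPhase ε c a b = fun y ↦ ∑ j, ((y j - a j) ^ 2 / (2 * ε) + b j * y j) + c := by
    ext y
    rw [chirpPhase, Finset.sum_add_distrib, Finset.sum_div]
  rw [hsum]
  refine (hasFDerivAt_sum_apply (g := fun j t ↦ (t - a j) ^ 2 / (2 * ε) + b j * t)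
    fun j ↦ ?_).add_const c
  refine (((((hasDerivAt_id' (x j)).sub_const (a j)).pow 2).div_const (2 * ε)).add
    ((hasDerivAt_id' (x j)).const_mul (b j))).congr_deriv ?_
  field_simp
  ring

theorem fderiv_chirpPhase_apply_single [DecidableEq ι] (x : ι → ℝ) (k : ι) :
    fderiv ℝ (chirpPhase ε c a b) x (Pi.single k 1) = (x k - a k) / ε + b k := by
  simp [(hasFDerivAt_chirpPhase x).fderiv, Pi.single_apply]

theorem norm_chirp (x : ι → ℝ) : ‖chirp ζ ε c d a b x‖ = chirpAmplitude ζ d a x := by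
  have hphase : (2 * π * I * (chirpPhase ε c a b x : ℂ)).re = 0 := by simp
  rw [chirp, norm_mul, norm_exp, hphase, Real.exp_zero, mul_one, norm_real]
  exact Real.norm_of_nonneg (exp_pos _).le

theorem chirpAmplitude_sq (x : ι → ℝ) :
    chirpAmplitude ζ d a x ^ 2 = rexp (2 * d) * rexp (-ζ⁻¹ * ∑ k, (x k - a k) ^ 2) := by
  rw [chirpAmplitude, sq, ← Real.exp_add, ← Real.exp_add]
  ring_nf

theorem chirp_mul_cexp_eq (w x : ι → ℝ) :
    chirp ζ ε c d a b x * cexp (-2 * π * I * ((∑ j, x j * w j : ℝ) : ℂ)) =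
      cexp (d + 2 * π * I * ((∑ k, (b k - w k) * a k + c : ℝ) : ℂ)) *
        cexp (-chirpRate ζ ε * ∑ k, ((x k - a k : ℝ) : ℂ) ^ 2 +
          2 * π * I * ∑ k, ((b k - w k : ℝ) : ℂ) * ((x k - a k : ℝ) : ℂ)) := by
  have hlin : ∑ k, ((b k - w k : ℝ) : ℂ) * ((x k - a k : ℝ) : ℂ) =
      ∑ k, (b k : ℂ) * x k - ∑ k, (x k : ℂ) * w k - ∑ k, ((b k : ℂ) - w k) * a k := by
    rw [← Finset.sum_sub_distrib, ← Finset.sum_sub_distrib]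
    exact Finset.sum_congr rfl fun k _ ↦ by push_cast; ring
  rw [chirp, chirpAmplitude, chirpPhase, chirpRate, ofReal_exp, ← Complex.exp_add,
    ← Complex.exp_add, ← Complex.exp_add, hlin]
  congr 1
  push_cast
  ring

theorem integral_norm_sq_chirp :
    ∫ x, ‖chirp ζ ε c d a b x‖ ^ 2 = rexp (2 * d) * √(π * ζ) ^ Fintype.card ι := by
  simp_rw [norm_chirp, chirpAmplitude_sq]
  rw [integral_const_mul, integral_exp_neg_mul_sum_sub_sq, div_inv_eq_mul]

theorem integral_sum_sq_mul_norm_sq_chirp (hζ : 0 < ζ) :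
    ∫ x, (∑ k, (x k - a k) ^ 2) * ‖chirp ζ ε c d a b x‖ ^ 2 =
      Fintype.card ι * ζ / 2 * ∫ x, ‖chirp ζ ε c d a b x‖ ^ 2 := by
  rw [integral_norm_sq_chirp]
  simp_rw [norm_chirp, chirpAmplitude_sq, mul_left_comm _ (rexp (2 * d))]
  rw [integral_const_mul, integral_sum_sub_sq_mul_exp_neg_mul_sum_sub_sq (inv_pos.2 hζ),
    div_inv_eq_mul]
  field_simp

theorem integral_covariance_chirp [DecidableEq ι] (hζ : 0 < ζ) (hε : 0 < ε) :
    ∫ x, (∑ k, |x k - a k| * |fderiv ℝ (chirpPhase ε c a b) x (Pi.single k 1) - b k|) *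
        chirpAmplitude ζ d a x ^ 2 =
      Fintype.card ι * ζ / (2 * ε) * ∫ x, ‖chirp ζ ε c d a b x‖ ^ 2 := by
  have hterm (x : ι → ℝ) (k : ι) :
      |x k - a k| * |fderiv ℝ (chirpPhase ε c a b) x (Pi.single k 1) - b k| =
        ε⁻¹ * (x k - a k) ^ 2 := by
    rw [fderiv_chirpPhase_apply_single, add_sub_cancel_right, abs_div, abs_of_pos hε,
      mul_div_assoc', abs_mul_abs_self]
    ring
  simp_rw [hterm, ← Finset.mul_sum, ← norm_chirp (ε := ε) (c := c) (b := b), mul_assoc]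
  rw [integral_const_mul, integral_sum_sq_mul_norm_sq_chirp hζ]
  ring

theorem chirpRate_re : (chirpRate ζ ε).re = (2 * ζ)⁻¹ := by
  simp [chirpRate]

theorem norm_sq_chirpRate : ‖chirpRate ζ ε‖ ^ 2 = (2 * ζ)⁻¹ ^ 2 + (π / ε) ^ 2 := by
  rw [← normSq_eq_norm_sq, normSq_apply, chirpRate_re]
  simp [chirpRate]
  ring

theorem norm_integral_chirp_mul_cexp (w : ι → ℝ) :
    ‖∫ x, chirp ζ ε c d a b x * cexp (-2 * π * I * ((∑ j, x j * w j : ℝ) : ℂ))‖ =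
      rexp d * ‖∫ y : ι → ℝ, cexp (-chirpRate ζ ε * ∑ k, (y k : ℂ) ^ 2 +
        2 * π * I * ∑ k, ((b k - w k : ℝ) : ℂ) * y k)‖ := by
  simp_rw [chirp_mul_cexp_eq]
  rw [integral_const_mul, norm_mul, norm_exp]
  congr 1
  · simp
  · exact congrArg norm (integral_sub_right_eq_self (fun y : ι → ℝ ↦ cexp (-chirpRate ζ ε *
      ∑ k, (y k : ℂ) ^ 2 + 2 * π * I * ∑ k, ((b k - w k : ℝ) : ℂ) * y k)) a)

theorem integral_sum_sq_mul_norm_sq_fourier_chirp (hζ : 0 < ζ) (hε : 0 < ε) :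
    ∫ w : ι → ℝ, (∑ k, (w k - b k) ^ 2) *
        ‖∫ x, chirp ζ ε c d a b x * cexp (-2 * π * I * ((∑ j, x j * w j : ℝ) : ℂ))‖ ^ 2 =
      Fintype.card ι / 2 * (1 / (4 * π ^ 2 * ζ) + ζ / ε ^ 2) *
        ∫ x, ‖chirp ζ ε c d a b x‖ ^ 2 := by
  let H (v : ι → ℝ) : ℝ := (∑ k, v k ^ 2) * ‖∫ y : ι → ℝ, cexp (-chirpRate ζ ε *
      ∑ k, (y k : ℂ) ^ 2 + 2 * π * I * ∑ k, (v k : ℂ) * y k)‖ ^ 2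
  have hH (w : ι → ℝ) : (∑ k, (w k - b k) ^ 2) *
      ‖∫ x, chirp ζ ε c d a b x * cexp (-2 * π * I * ((∑ j, x j * w j : ℝ) : ℂ))‖ ^ 2 =
        rexp (2 * d) * H (b - w) := by
    simp only [H, norm_integral_chirp_mul_cexp, Pi.sub_apply, sub_sq_comm (w _)]
    rw [mul_pow, ← Real.exp_nat_mul]
    push_cast
    ring
  have hre : 0 < (chirpRate ζ ε).re := by rw [chirpRate_re]; positivity
  simp_rw [hH]
  rw [integral_const_mul, integral_sub_left_eq_self H,
    integral_sum_sq_mul_norm_sq_integral_cexp_neg_mul_sum_sq_add hre, norm_sq_chirpRate,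
    chirpRate_re, integral_norm_sq_chirp]
  field_simp
  ring

end Chirp

theorem stmt19 (N : ℕ) (zeta eps : ℝ) (hzeta : 0 < zeta) (heps : 0 < eps)
    (a b : Fin N → ℝ) (c d : ℝ)
    (lam phi : (Fin N → ℝ) → ℝ)
    (hlamdef : ∀ x, lam x = Real.exp (-(∑ k, (x k - a k) ^ 2) / (2 * zeta) + d))
    (hphidef : ∀ x, phi x = (∑ k, (x k - a k) ^ 2) / (2 * eps) + (∑ k, b k * x k) + c)
    (f F : (Fin N → ℝ) → ℂ)
    (hf : ∀ x, f x = (lam x : ℂ) * Complex.exp (2 * (Real.pi : ℂ) * Complex.I * (phi x : ℂ)))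
    (hF : ∀ w, F w = ∫ x : Fin N → ℝ,
      f x * Complex.exp (-2 * (Real.pi : ℂ) * Complex.I * ((∑ j, x j * w j : ℝ) : ℂ))) :
    (∫ x : Fin N → ℝ, (∑ k, (x k - a k) ^ 2) * ‖f x‖ ^ 2) *
        ∫ w : Fin N → ℝ, (∑ k, (w k - b k) ^ 2) * ‖F w‖ ^ 2 =
      (N : ℝ) ^ 2 / (16 * Real.pi ^ 2) * (∫ x : Fin N → ℝ, ‖f x‖ ^ 2) ^ 2 +
        (∫ x : Fin N → ℝ,
          (∑ k, |x k - a k| * |fderiv ℝ phi x (Pi.single k 1) - b k|) * lam x ^ 2) ^ 2 := by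
  obtain rfl : lam = chirpAmplitude zeta d a := funext hlamdef
  obtain rfl : phi = chirpPhase eps c a b := funext hphidef
  obtain rfl : f = chirp zeta eps c d a b := funext hf
  simp only [hF]
  rw [integral_sum_sq_mul_norm_sq_chirp hzeta, integral_sum_sq_mul_norm_sq_fourier_chirp hzeta heps,
    integral_covariance_chirp hzeta heps, Fintype.card_fin]
  field_simp
  ring
end
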